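/- Tight advice lower bound for string guessing with known history (Theorem 13). Let q ≥ 2, n ≥ 1, and b be natural numbers and let 0 < α < (q−1)/q. Let μ be a randomized algorithm reading b bits of advice for the n-round guessing game over Fin q (a PMF over pairs (φ, g) as below), whose cost on input x : Fin n → Fin q for a pair (φ,g) is the number of rounds i in which the answer y_i of (φ,g) differs from x_i. If E_{(φ,g)∼μ}[cost on x] ≤ α·n for every input x, then b ≥ K_{1/q}(1−α)·n (which equals (1 − h_q(α))·n·log₂ q, where h_q is the q-ary entropy function). -/

import Mathlib

open Classical

/-- The binary-divergence-type function `K_y(x) = x log₂(x/y) + (1-x) log₂((1-x)/(1-y))`. -/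
noncomputable def Kfun (y x : ℝ) : ℝ :=
  x * Real.logb 2 (x / y) + (1 - x) * Real.logb 2 ((1 - x) / (1 - y))

/-- A deterministic algorithm reading `b` bits of advice for an `n`-round guessing game
with known history over the alphabet `Fin q`. -/
abbrev AdviceAlg (n q b : ℕ) : Type :=
  ((Fin n → Fin q) → Fin (2 ^ b)) ×
    (Fin (2 ^ b) → (i : Fin n) → ({j : Fin n // j < i} → Fin q) → Fin q)

/-!
Weight an input `x` against an algorithm by `∏ᵢ w (xᵢ - yᵢ)`, where `yᵢ` is the algorithm's
answer in round `i` and `w` gives mass `1 - α` to `0` and `α / (q - 1)` to every other symbol.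
Because the history is known, `x ↦ (xᵢ - yᵢ)ᵢ` is a bijection for each fixed advice string, so
a deterministic algorithm spreads total weight at most `2 ^ b` over all inputs, and so does any
mixture of them. Conversely, by Jensen's inequality an expected number of at most `α n` mistakes
forces the mixture weight of every input to be at least
`exp (n (log (1 - α) + α log (α / ((q - 1)(1 - α)))))`.
Summing over the `q ^ n` inputs and taking logarithms gives `b log 2 ≥ n K_{1/q}(1 - α) log 2`.
-/

open Finset Real

section KnownHistory

variable {n : ℕ} {G : Type*}

theorem injective_sub_guess [AddGroup G]
    (s : (i : Fin n) → ({j : Fin n // j < i} → G) → G) :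
    Function.Injective fun x : Fin n → G => fun i => x i - s i fun j => x j.1 := by
  intro x x' h
  funext i
  induction i using WellFoundedLT.induction with
  | _ i ih =>
    have hhist : (fun j : {j : Fin n // j < i} => x j.1) = fun j => x' j.1 :=
      funext fun j => ih j.1 j.2
    have hi := congrFun h i
    simp only [hhist] at hi
    exact sub_left_injective hi

theorem sum_prod_sub_guess [AddGroup G] [Fintype G] {R : Type*} [CommSemiring R]
    (s : (i : Fin n) → ({j : Fin n // j < i} → G) → G) (w : G → R) :
    ∑ x : Fin n → G, ∏ i, w (x i - s i fun j => x j.1) = (∑ d, w d) ^ n := by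
  rw [Fintype.sum_pow, ← (Finite.injective_iff_bijective.mp (injective_sub_guess s)).sum_comp
    fun y => ∏ i, w (y i)]

theorem sum_prod_sub_advice_guess_le [AddGroup G] [Fintype G] {A : Type*} [Fintype A]
    (φ : (Fin n → G) → A) (g : A → (i : Fin n) → ({j : Fin n // j < i} → G) → G)
    {w : G → ℝ} (hw : ∀ d, 0 ≤ w d) :
    ∑ x : Fin n → G, ∏ i, w (x i - g (φ x) i fun j => x j.1) ≤
      Fintype.card A * (∑ d, w d) ^ n :=
  calc ∑ x : Fin n → G, ∏ i, w (x i - g (φ x) i fun j => x j.1)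
      ≤ ∑ x : Fin n → G, ∑ a, ∏ i, w (x i - g a i fun j => x j.1) :=
        sum_le_sum fun x _ => single_le_sum (f := fun a => ∏ i, w (x i - g a i fun j => x j.1))
          (fun a _ => prod_nonneg fun i _ => hw _) (mem_univ (φ x))
    _ = Fintype.card A * (∑ d, w d) ^ n := by
        rw [sum_comm]
        simp only [sum_prod_sub_guess, sum_const, card_univ, nsmul_eq_mul]

end KnownHistory

noncomputable def mistakeWeight (G : Type*) [Fintype G] [Zero G] (α : ℝ) (d : G) : ℝ :=
  if d = 0 then 1 - α else α / (Fintype.card G - 1)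

section MistakeWeight

variable {G : Type*} [Fintype G]

theorem sum_mistakeWeight [Zero G] (hG : 1 < Fintype.card G) (α : ℝ) :
    ∑ d, mistakeWeight G α d = 1 := by
  have hG' : (Fintype.card G : ℝ) - 1 ≠ 0 := (sub_pos.2 (by exact_mod_cast hG)).ne'
  rw [Fintype.sum_eq_add_sum_compl 0]
  have hne : ∀ d ∈ ({0} : Finset G)ᶜ, mistakeWeight G α d = α / (Fintype.card G - 1) :=
    fun d hd => if_neg (by simpa using hd)
  rw [sum_congr rfl hne, sum_const, card_compl, card_singleton, nsmul_eq_mul,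
    Nat.cast_sub hG.le, mistakeWeight, if_pos rfl, Nat.cast_one, mul_div_cancel₀ α hG',
    sub_add_cancel]

theorem mistakeWeight_pos [Zero G] (hG : 1 < Fintype.card G) {α : ℝ} (hα0 : 0 < α) (hα1 : α < 1)
    (d : G) : 0 < mistakeWeight G α d := by
  have hG' : (0 : ℝ) < Fintype.card G - 1 := sub_pos.2 (by exact_mod_cast hG)
  unfold mistakeWeight
  split_ifs
  · exact sub_pos.2 hα1
  · positivity

theorem log_prod_mistakeWeight [AddGroup G] [DecidableEq G] {ι : Type*} [Fintype ι]
    (hG : 1 < Fintype.card G) {α : ℝ} (hα0 : 0 < α) (hα1 : α < 1) (x y : ι → G) :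
    log (∏ i, mistakeWeight G α (x i - y i)) = Fintype.card ι * log (1 - α) +
      #{i | y i ≠ x i} * (log (α / (Fintype.card G - 1)) - log (1 - α)) := by
  have hterm : ∀ i, log (mistakeWeight G α (x i - y i)) = log (1 - α) +
      (if y i ≠ x i then 1 else 0) * (log (α / (Fintype.card G - 1)) - log (1 - α)) := by
    intro i
    by_cases h : x i = y i <;> simp [mistakeWeight, h, Ne.symm, sub_eq_zero]
  rw [log_prod fun i _ => (mistakeWeight_pos hG hα0 hα1 _).ne', sum_congr rfl fun i _ => hterm i,
    sum_add_distrib, ← sum_mul, sum_boole, sum_const, card_univ, nsmul_eq_mul]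

end MistakeWeight

theorem exp_add_mul_le_sum_mul {ι : Type*} [Fintype ι] {μ P m : ι → ℝ} {A D M : ℝ}
    (hμ0 : ∀ i, 0 ≤ μ i) (hμ1 : ∑ i, μ i = 1) (hP : ∀ i, 0 < P i)
    (hlog : ∀ i, log (P i) = A + m i * D) (hD : D ≤ 0) (hm : ∑ i, μ i * m i ≤ M) :
    exp (A + M * D) ≤ ∑ i, μ i * P i :=
  calc exp (A + M * D) ≤ exp (∑ i, μ i * log (P i)) := by
        have hmean : ∑ i, μ i * log (P i) = A + (∑ i, μ i * m i) * D := by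
          simp only [hlog, mul_add, sum_add_distrib, ← sum_mul, hμ1, ← mul_assoc, one_mul]
        rw [exp_le_exp, hmean]
        linarith [mul_le_mul_of_nonpos_right hm hD]
    _ ≤ ∑ i, μ i * exp (log (P i)) :=
        convexOn_exp.map_sum_le (fun i _ => hμ0 i) hμ1 fun i _ => Set.mem_univ _
    _ = ∑ i, μ i * P i := by simp only [exp_log (hP _)]

theorem Kfun_one_sub_mul_log_two {q α : ℝ} (hq : 1 < q) (hα0 : 0 < α) (hα1 : α < 1) :
    Kfun (1 / q) (1 - α) * log 2 =
      log q + log (1 - α) + α * (log (α / (q - 1)) - log (1 - α)) := by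
  have hq0 : 0 < q := by linarith
  have hq1 : 0 < q - 1 := by linarith
  have h1α : 0 < 1 - α := by linarith
  have e1 : (1 - α) / (1 / q) = (1 - α) * q := by field_simp
  have e2 : α / (1 - 1 / q) = α / (q - 1) * q := by field_simp
  rw [Kfun, sub_sub_cancel, e1, e2, logb, logb, log_mul h1α.ne' hq0.ne',
    log_mul (by positivity) hq0.ne']
  field_simp
  ring

theorem log_div_sub_one_le_log_one_sub {q α : ℝ} (hq : 1 < q) (hα0 : 0 < α)
    (hα1 : α ≤ (q - 1) / q) : log (α / (q - 1)) ≤ log (1 - α) := by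
  have hq0 : 0 < q := by linarith
  refine log_le_log (div_pos hα0 (by linarith)) ((div_le_iff₀ (by linarith)).2 ?_)
  nlinarith [(le_div_iff₀ hq0).1 hα1]

namespace AdviceAlg

variable {n q b : ℕ}

abbrev answer (alg : AdviceAlg n q b) (x : Fin n → Fin q) (i : Fin n) : Fin q :=
  alg.2 (alg.1 x) i fun j => x j.1

variable [NeZero q] {μ : AdviceAlg n q b → ℝ}

theorem sum_sum_mul_prod_le (hμ0 : ∀ alg, 0 ≤ μ alg) (hμ1 : ∑ alg, μ alg = 1) {w : Fin q → ℝ}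
    (hw0 : ∀ d, 0 ≤ w d) (hw1 : ∑ d, w d = 1) :
    ∑ x, ∑ alg, μ alg * ∏ i, w (x i - alg.answer x i) ≤ 2 ^ b :=
  calc ∑ x, ∑ alg, μ alg * ∏ i, w (x i - alg.answer x i)
      = ∑ alg, μ alg * ∑ x, ∏ i, w (x i - alg.answer x i) := by
        rw [sum_comm]; simp only [mul_sum]
    _ ≤ ∑ alg, μ alg * 2 ^ b := by
        refine sum_le_sum fun alg _ => mul_le_mul_of_nonneg_left ?_ (hμ0 alg)
        simpa [hw1] using sum_prod_sub_advice_guess_le alg.1 alg.2 hw0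
    _ = 2 ^ b := by rw [← sum_mul, hμ1, one_mul]

theorem exp_le_sum_mul_prod_mistakeWeight (hq : 1 < q) {α : ℝ} (hα0 : 0 < α)
    (hα1 : α ≤ (q - 1) / q) (hμ0 : ∀ alg, 0 ≤ μ alg) (hμ1 : ∑ alg, μ alg = 1)
    {x : Fin n → Fin q} (hx : ∑ alg, μ alg * (#{i | alg.answer x i ≠ x i} : ℝ) ≤ α * n) :
    exp (n * (log (1 - α) + α * (log (α / (q - 1)) - log (1 - α)))) ≤
      ∑ alg, μ alg * ∏ i, mistakeWeight (Fin q) α (x i - alg.answer x i) := by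
  have hcard : 1 < Fintype.card (Fin q) := by rwa [Fintype.card_fin]
  have hα1' : α < 1 := hα1.trans_lt ((div_lt_one (by positivity)).2 (by linarith))
  have hD := sub_nonpos.2 (log_div_sub_one_le_log_one_sub (by exact_mod_cast hq) hα0 hα1)
  rw [mul_add, ← mul_assoc, mul_comm (n : ℝ) α]
  refine exp_add_mul_le_sum_mul hμ0 hμ1
    (fun alg => prod_pos fun i _ => mistakeWeight_pos hcard hα0 hα1' _) (fun alg => ?_) hD hx
  rw [log_prod_mistakeWeight hcard hα0 hα1', Fintype.card_fin, Fintype.card_fin]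

end AdviceAlg

theorem string_guessing_lower_bound_general
    {q n b : ℕ} (hq : 2 ≤ q)
    (α : ℝ) (hα0 : 0 < α) (hα1 : α < ((q : ℝ) - 1) / (q : ℝ))
    (μ : AdviceAlg n q b → ℝ) (hμ0 : ∀ a, 0 ≤ μ a) (hμ1 : ∑ a, μ a = 1)
    (hperf : ∀ x : Fin n → Fin q,
      (∑ alg, μ alg *
          ((Finset.univ.filter
            (fun i : Fin n => alg.2 (alg.1 x) i (fun j => x j.1) ≠ x i)).card : ℝ))
        ≤ α * n) :
    (b : ℝ) ≥ Kfun (1 / (q : ℝ)) (1 - α) * n := by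
  have : NeZero q := ⟨by omega⟩
  have hq1 : (1 : ℝ) < q := by exact_mod_cast hq
  have hcard : 1 < Fintype.card (Fin q) := by rw [Fintype.card_fin]; omega
  have hα1' : α < 1 := hα1.trans ((div_lt_one (by linarith)).2 (by linarith))
  set E := n * (log (1 - α) + α * (log (α / (q - 1)) - log (1 - α)))
  have hmass : (q : ℝ) ^ n * exp E ≤ 2 ^ b :=
    calc (q : ℝ) ^ n * exp E = ∑ _x : Fin n → Fin q, exp E := by simp
      _ ≤ ∑ x, ∑ alg, μ alg * ∏ i, mistakeWeight (Fin q) α (x i - alg.answer x i) :=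
        sum_le_sum fun x _ =>
          AdviceAlg.exp_le_sum_mul_prod_mistakeWeight hq hα0 hα1.le hμ0 hμ1 (hperf x)
      _ ≤ 2 ^ b := AdviceAlg.sum_sum_mul_prod_le hμ0 hμ1
          (fun d => (mistakeWeight_pos hcard hα0 hα1' d).le)
          (sum_mistakeWeight hcard α)
  have hlog := log_le_log (by positivity) hmass
  rw [log_mul (by positivity) (exp_pos E).ne', log_exp, log_pow, log_pow] at hlog
  rw [ge_iff_le, ← mul_le_mul_iff_of_pos_right (log_pos one_lt_two)]
  linear_combination hlog + n * Kfun_one_sub_mul_log_two hq1 hα0 hα1'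

/-- Tight advice lower bound for string guessing with known history (Theorem 13):
a randomized algorithm reading `b` bits of advice whose expected number of wrong guesses
is at most `α·n` on every input string over `Fin q` satisfies `b ≥ K_{1/q}(1−α)·n`. -/
theorem string_guessing_lower_bound
    {q n b : ℕ} (hq : 2 ≤ q) (hn : 1 ≤ n)
    (α : ℝ) (hα0 : 0 < α) (hα1 : α < ((q : ℝ) - 1) / (q : ℝ))
    (μ : AdviceAlg n q b → ℝ) (hμ0 : ∀ a, 0 ≤ μ a) (hμ1 : ∑ a, μ a = 1)
    (hperf : ∀ x : Fin n → Fin q,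
      (∑ alg, μ alg *
          ((Finset.univ.filter
            (fun i : Fin n => alg.2 (alg.1 x) i (fun j => x j.1) ≠ x i)).card : ℝ))
        ≤ α * n) :
    (b : ℝ) ≥ Kfun (1 / (q : ℝ)) (1 - α) * n :=
  string_guessing_lower_bound_general hq α hα0 hα1 μ hμ0 hμ1 hperf
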